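/- Let A, B be nonempty closed subsets of a complete metric space (X,d) such that B is approximatively compact with respect to A, A₀ ≠ ∅, T(A₀) ⊆ B₀, (A,B) has the p-property, and T : A → B is a generalized F-proximal contraction of the first kind. Then there exists x ∈ A with d(x, T x) = d(A,B). -/

import Mathlib

open Filter Topology

noncomputable def setDist {X : Type*} [MetricSpace X] (A B : Set X) : ℝ :=
  sInf (Set.image2 dist A B)

def pProperty {X : Type*} [MetricSpace X] (A B : Set X) : Prop :=
  ∀ u₁ ∈ A, ∀ u₂ ∈ A, ∀ v₁ ∈ B, ∀ v₂ ∈ B,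
    dist u₁ v₁ = setDist A B → dist u₂ v₂ = setDist A B → dist u₁ u₂ = dist v₁ v₂

def A0 {X : Type*} [MetricSpace X] (A B : Set X) : Set X :=
  {x ∈ A | ∃ y ∈ B, dist x y = setDist A B}

def B0 {X : Type*} [MetricSpace X] (A B : Set X) : Set X :=
  {y ∈ B | ∃ x ∈ A, dist x y = setDist A B}

def approxCompact {X : Type*} [MetricSpace X] (A B : Set X) : Prop :=
  ∀ x ∈ A, ∀ y : ℕ → X, (∀ n, y n ∈ B) →
    Tendsto (fun n => dist x (y n)) atTop (nhds (Metric.infDist x B)) →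
    ∃ z ∈ B, ∃ φ : ℕ → ℕ, StrictMono φ ∧ Tendsto (y ∘ φ) atTop (nhds z)

def OmegaF (F : ℝ → ℝ) : Prop :=
  (∀ x y : ℝ, 0 < x → x < y → F x < F y) ∧
  (∀ α : ℕ → ℝ, (∀ n, 0 < α n) →
    (Tendsto α atTop (nhds 0) ↔ Tendsto (fun n => F (α n)) atTop atBot)) ∧
  (∃ k ∈ Set.Ioo (0:ℝ) 1,
    Tendsto (fun t => t ^ k * F t) (nhdsWithin 0 (Set.Ioi 0)) (nhds 0))

def HRContraction {X : Type*} [MetricSpace X] (T : X → X) (F : ℝ → ℝ)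
    (a b c e τ L : ℝ) : Prop :=
  ∀ x y : X, 0 < dist (T x) (T y) →
    τ + F (dist (T x) (T y)) ≤
      F (a * dist x y + b * dist x (T x) + c * dist y (T y) +
         e * dist x (T y) + L * dist y (T x))

def GFProximal {X : Type*} [MetricSpace X] (A B : Set X) (T : X → X) (F : ℝ → ℝ)
    (a b c h τ : ℝ) : Prop :=
  ∀ u₁ ∈ A, ∀ u₂ ∈ A, ∀ x₁ ∈ A, ∀ x₂ ∈ A,
    dist u₁ (T x₁) = setDist A B → dist u₂ (T x₂) = setDist A B → u₁ ≠ u₂ →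
      τ + F (dist u₁ u₂) ≤
        F (a * dist x₁ x₂ + b * dist u₁ x₁ + c * dist u₂ x₂ +
           h * (dist u₂ x₁ + dist u₁ x₂))

/-!
The proximal iteration `d(xₙ₊₁, T xₙ) = d(A, B)` stays in `A₀` because `T(A₀) ⊆ B₀`. Applied to
three consecutive iterates, the contraction gives `τ + F(dₙ₊₁) ≤ F(dₙ)` for `dₙ = d(xₙ, xₙ₊₁)`, so
`F(dₙ) ≤ F(d₀) - nτ`. Hence `dₙ → 0`, and the growth condition `t^k F(t) → 0` forces
`n dₙ^k → 0`, i.e. `dₙ ≤ n^(-1/k)` eventually: the steps are summable and `(xₙ)` converges to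
some `ξ ∈ A`. Approximative compactness puts `ξ` in `A₀`, so `ξ` has a proximal image `u`;
comparing `u` with the iterates in the limit gives `d(u, ξ) ≤ (c + h) d(u, ξ)`, whence `u = ξ`.
-/

open Set

section BestProximity

variable {X : Type*} [MetricSpace X] {A B : Set X}

theorem setDist_le_dist {x y : X} (hx : x ∈ A) (hy : y ∈ B) : setDist A B ≤ dist x y :=
  csInf_le ⟨0, by rintro _ ⟨_, _, _, _, rfl⟩; exact dist_nonneg⟩ (mem_image2_of_mem hx hy)

theorem setDist_le_infDist {x : X} (hB : B.Nonempty) (hx : x ∈ A) :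
    setDist A B ≤ Metric.infDist x B :=
  (Metric.le_infDist hB).2 fun _ hy => setDist_le_dist hx hy

theorem tendsto_dist_setDist_of_tendsto {x y : ℕ → X} {ξ : X} (hξ : ξ ∈ A) (hy : ∀ n, y n ∈ B)
    (hxy : ∀ n, dist (x n) (y n) = setDist A B) (hx : Tendsto x atTop (𝓝 ξ)) :
    Tendsto (fun n => dist ξ (y n)) atTop (𝓝 (setDist A B)) := by
  have hξx : Tendsto (fun n => dist ξ (x n) + setDist A B) atTop (𝓝 (setDist A B)) := by
    simpa using ((tendsto_const_nhds (x := ξ)).dist hx).add_const (setDist A B)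
  refine tendsto_of_tendsto_of_tendsto_of_le_of_le tendsto_const_nhds hξx
    (fun n => setDist_le_dist hξ (hy n)) fun n => ?_
  calc dist ξ (y n) ≤ dist ξ (x n) + dist (x n) (y n) := dist_triangle _ _ _
    _ = dist ξ (x n) + setDist A B := by rw [hxy n]

theorem mem_A0_of_tendsto_dist (hac : approxCompact A B) {ξ : X} {y : ℕ → X} (hξ : ξ ∈ A)
    (hy : ∀ n, y n ∈ B) (hlim : Tendsto (fun n => dist ξ (y n)) atTop (𝓝 (setDist A B))) :
    ξ ∈ A0 A B := by
  have hinf : Metric.infDist ξ B = setDist A B :=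
    le_antisymm
      (ge_of_tendsto hlim (.of_forall fun n => Metric.infDist_le_dist_of_mem (hy n)))
      (setDist_le_infDist ⟨y 0, hy 0⟩ hξ)
  obtain ⟨z, hzB, φ, hφ, hz⟩ := hac ξ hξ y hy (hinf ▸ hlim)
  exact ⟨hξ, z, hzB, tendsto_nhds_unique (tendsto_const_nhds.dist hz) (hlim.comp hφ.tendsto_atTop)⟩

theorem exists_proximal_orbit {T : X → X} (hA0 : (A0 A B).Nonempty)
    (hTA0 : ∀ x ∈ A0 A B, T x ∈ B0 A B) :
    ∃ x : ℕ → X, ∀ n, x n ∈ A0 A B ∧ dist (x (n + 1)) (T (x n)) = setDist A B := by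
  have step : ∀ p : A0 A B, ∃ q : A0 A B, dist (q : X) (T p) = setDist A B := fun p => by
    obtain ⟨hTp, u, hu, hud⟩ := hTA0 p p.2
    exact ⟨⟨u, hu, T p, hTp, hud⟩, hud⟩
  choose g hg using step
  obtain ⟨x₀, hx₀⟩ := hA0
  refine ⟨fun n => g^[n] ⟨x₀, hx₀⟩, fun n => ⟨(g^[n] _).2, ?_⟩⟩
  simp only [Function.iterate_succ_apply']
  exact hg _

end BestProximity

theorem summable_of_eventually_natCast_mul_rpow_le_one {d : ℕ → ℝ} {k : ℝ} (hd : ∀ n, 0 ≤ d n)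
    (hk : k ∈ Ioo 0 1) (h : ∀ᶠ n : ℕ in atTop, n * d n ^ k ≤ 1) : Summable d := by
  have hexp : -k⁻¹ < -1 := neg_lt_neg (one_lt_inv_iff₀.2 hk)
  refine Summable.of_norm_bounded_eventually_nat (Real.summable_nat_rpow.2 hexp) ?_
  filter_upwards [h, eventually_gt_atTop 0] with n hn hn0
  have hn0 : (0 : ℝ) < n := Nat.cast_pos.2 hn0
  have hdk : d n ^ k ≤ (n : ℝ)⁻¹ := by
    rw [← one_div, le_div_iff₀ hn0, mul_comm]
    exact hn
  calc ‖d n‖ = (d n ^ k) ^ k⁻¹ := by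
        rw [Real.norm_of_nonneg (hd n), ← Real.rpow_mul (hd n), mul_inv_cancel₀ hk.1.ne',
          Real.rpow_one]
    _ ≤ ((n : ℝ)⁻¹) ^ k⁻¹ :=
        Real.rpow_le_rpow (Real.rpow_nonneg (hd n) k) hdk (inv_nonneg.2 hk.1.le)
    _ = (n : ℝ) ^ (-k⁻¹) := by rw [Real.inv_rpow hn0.le, ← Real.rpow_neg hn0.le]

namespace OmegaF

variable {F : ℝ → ℝ}

theorem strictMonoOn (hF : OmegaF F) : StrictMonoOn F (Ioi 0) :=
  fun _ hs _ _ hst => hF.1 _ _ hs hst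

theorem le_of_add_le (hF : OmegaF F) {τ s t : ℝ} (hτ : 0 ≤ τ) (ht : 0 < t) (hs : 0 < s)
    (h : τ + F t ≤ F s) : t ≤ s :=
  (hF.strictMonoOn.le_iff_le ht hs).1 (by linarith)

theorem summable_of_add_le (hF : OmegaF F) {τ : ℝ} (hτ : 0 < τ) {d : ℕ → ℝ} (hd : ∀ n, 0 < d n)
    (hstep : ∀ n, τ + F (d (n + 1)) ≤ F (d n)) : Summable d := by
  obtain ⟨-, hF0, k, hk, hFk⟩ := hF
  have hlin : ∀ n : ℕ, n * τ ≤ F (d 0) - F (d n) := by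
    intro n
    induction n with
    | zero => simp
    | succ n ih => push_cast; linarith [hstep n]
  have hFd : Tendsto (fun n => F (d n)) atTop atBot :=
    tendsto_atBot_mono (fun n => by linarith [hlin n]) <|
      tendsto_atBot_add_const_left _ (F (d 0)) <| tendsto_neg_atBot_iff.2 <|
        tendsto_natCast_atTop_atTop.atTop_mul_const hτ
  have hd0 : Tendsto d atTop (𝓝 0) := (hF0 d hd).2 hFd
  have hdk : Tendsto (fun n => d n ^ k * (F (d 0) - F (d n))) atTop (𝓝 0) := by
    have hpow : Tendsto (fun n => d n ^ k) atTop (𝓝 0) := by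
      simpa [Real.zero_rpow hk.1.ne'] using hd0.rpow_const (Or.inr hk.1.le)
    have hprod := hFk.comp (tendsto_nhdsWithin_iff.2 ⟨hd0, .of_forall hd⟩)
    simpa [mul_sub] using (hpow.mul_const (F (d 0))).sub hprod
  refine summable_of_eventually_natCast_mul_rpow_le_one (fun n => (hd n).le) hk ?_
  filter_upwards [hdk.eventually_le_const hτ] with n hn
  have hnτ : τ * (n * d n ^ k) ≤ τ * 1 := by
    have := mul_le_mul_of_nonneg_left (hlin n) (Real.rpow_nonneg (hd n).le k)
    linarith
  exact le_of_mul_le_mul_left hnτ hτ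

end OmegaF

namespace GFProximal

variable {X : Type*} [MetricSpace X] {A B : Set X} {T : X → X} {F : ℝ → ℝ} {a b c h τ : ℝ}

theorem add_le_of_consecutive (hprox : GFProximal A B T F a b c h τ) (hF : OmegaF F)
    (ha : 0 < a) (hb : 0 ≤ b) (hc : 0 < c) (hh : 0 ≤ h) (hτ : 0 ≤ τ)
    (hsum : a + b + c + 2 * h = 1) {x y z : X} (hx : x ∈ A) (hy : y ∈ A) (hz : z ∈ A)
    (hxy : dist y (T x) = setDist A B) (hyz : dist z (T y) = setDist A B) (hne : y ≠ z) :
    τ + F (dist y z) ≤ F (dist x y) := by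
  have key := hprox y hy z hz x hx y hy hxy hyz hne
  have hyz_pos : 0 < dist y z := dist_pos.2 hne
  set s := a * dist x y + b * dist y x + c * dist z y + h * (dist z x + dist y y)
  have hs_le : s ≤ (a + b + h) * dist x y + (c + h) * dist y z := by
    have := dist_triangle z y x
    simp only [s, dist_self, dist_comm y x, dist_comm z y] at this ⊢
    nlinarith
  have hs_pos : 0 < s := by
    simp only [s, dist_comm z y]
    have := mul_pos hc hyz_pos
    positivity
  have hle : dist y z ≤ dist x y := by
    have := hF.le_of_add_le hτ hyz_pos hs_pos key
    nlinarith
  exact key.trans (hF.strictMonoOn.monotoneOn hs_pos (hyz_pos.trans_le hle) (by nlinarith))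

theorem eq_of_tendsto (hprox : GFProximal A B T F a b c h τ) (hF : OmegaF F)
    (ha : 0 ≤ a) (hb : 0 ≤ b) (hc : 0 < c) (hh : 0 ≤ h) (hτ : 0 ≤ τ) (hch : c + h < 1)
    {x : ℕ → X} {ξ u : X} (hxA : ∀ n, x n ∈ A)
    (hx : ∀ n, dist (x (n + 1)) (T (x n)) = setDist A B) (hξ : Tendsto x atTop (𝓝 ξ))
    (hξA : ξ ∈ A) (huA : u ∈ A) (hu : dist u (T ξ) = setDist A B) : u = ξ := by
  by_contra hne
  have hD : 0 < dist u ξ := dist_pos.2 hne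
  set s : ℕ → ℝ := fun n => a * dist (x n) ξ + b * dist (x (n + 1)) (x n) + c * dist u ξ +
    h * (dist u (x n) + dist (x (n + 1)) ξ)
  have hs_pos : ∀ n, 0 < s n := fun n => by
    have := mul_pos hc hD
    positivity
  have hle : ∀ n, dist (x (n + 1)) u ≤ s n := fun n => by
    rcases eq_or_ne (x (n + 1)) u with heq | hne'
    · rw [heq, dist_self]
      exact (hs_pos n).le
    · exact hF.le_of_add_le hτ (dist_pos.2 hne') (hs_pos n)
        (hprox _ (hxA _) u huA (x n) (hxA n) ξ hξA (hx n) hu hne')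
  have hξ' := hξ.comp (tendsto_add_atTop_nat 1)
  have hs : Tendsto s atTop (𝓝 ((c + h) * dist u ξ)) := by
    have hξξ : Tendsto (fun _ : ℕ => ξ) atTop (𝓝 ξ) := tendsto_const_nhds
    have hu' : Tendsto (fun _ : ℕ => u) atTop (𝓝 u) := tendsto_const_nhds
    have := ((((hξ.dist hξξ).const_mul a).add ((hξ'.dist hξ).const_mul b)).add_const
      (c * dist u ξ)).add (((hu'.dist hξ).add (hξ'.dist hξξ)).const_mul h)
    rw [dist_self] at this
    convert this using 2
    · rfl
    · ring
  have hlim := le_of_tendsto_of_tendsto' (hξ'.dist (tendsto_const_nhds (x := u))) hs hle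
  rw [dist_comm] at hlim
  nlinarith

end GFProximal

theorem stmt6_general {X : Type*} [MetricSpace X] [CompleteSpace X] (A B : Set X)
    (hAc : IsClosed A)
    (hac : approxCompact A B) (hA0 : (A0 A B).Nonempty)
    (T : X → X) (hTA0 : ∀ x ∈ A0 A B, T x ∈ B0 A B)
    (F : ℝ → ℝ) (hF : OmegaF F) (a b c h τ : ℝ)
    (ha : 0 < a) (hb : 0 < b) (hc : 0 < c) (hh : 0 < h) (hτ : 0 < τ)
    (hsum : a + b + c + 2 * h = 1)
    (hprox : GFProximal A B T F a b c h τ) :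
    ∃ x ∈ A, dist x (T x) = setDist A B := by
  obtain ⟨x, hx⟩ := exists_proximal_orbit hA0 hTA0
  have hxA n : x n ∈ A := (hx n).1.1
  have hTxB n : T (x n) ∈ B := (hTA0 _ (hx n).1).1
  by_cases hfix : ∃ n, x (n + 1) = x n
  · obtain ⟨n, hn⟩ := hfix
    exact ⟨x n, hxA n, hn ▸ (hx n).2⟩
  push Not at hfix
  have hsteps : Summable fun n => dist (x n) (x (n + 1)) :=
    hF.summable_of_add_le hτ (fun n => dist_pos.2 (hfix n).symm) fun n =>
      hprox.add_le_of_consecutive hF ha hb.le hc hh.le hτ.le hsum (hxA n) (hxA _) (hxA _)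
        (hx n).2 (hx _).2 (hfix _).symm
  obtain ⟨ξ, hξ⟩ :=
    cauchySeq_tendsto_of_complete (cauchySeq_of_dist_le_of_summable _ (fun _ => le_rfl) hsteps)
  have hξA : ξ ∈ A := hAc.mem_of_tendsto hξ (.of_forall hxA)
  have hξA0 : ξ ∈ A0 A B := mem_A0_of_tendsto_dist hac hξA hTxB
    (tendsto_dist_setDist_of_tendsto hξA hTxB (fun n => (hx n).2)
      (hξ.comp (tendsto_add_atTop_nat 1)))
  obtain ⟨-, u, huA, hu⟩ := hTA0 ξ hξA0
  have huξ : u = ξ := hprox.eq_of_tendsto hF ha.le hb.le hc hh.le hτ.le (by linarith) hxA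
    (fun n => (hx n).2) hξ hξA huA hu
  exact ⟨ξ, hξA, huξ ▸ hu⟩

theorem stmt6 {X : Type*} [MetricSpace X] [CompleteSpace X] (A B : Set X)
    (hA : A.Nonempty) (hB : B.Nonempty) (hAc : IsClosed A) (hBc : IsClosed B)
    (hac : approxCompact A B) (hA0 : (A0 A B).Nonempty) (hp : pProperty A B)
    (T : X → X) (hT : ∀ x ∈ A, T x ∈ B) (hTA0 : ∀ x ∈ A0 A B, T x ∈ B0 A B)
    (F : ℝ → ℝ) (hF : OmegaF F) (a b c h τ : ℝ)
    (ha : 0 < a) (hb : 0 < b) (hc : 0 < c) (hh : 0 < h) (hτ : 0 < τ)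
    (hsum : a + b + c + 2 * h = 1) (hc1 : c ≠ 1)
    (hprox : GFProximal A B T F a b c h τ) :
    ∃ x ∈ A, dist x (T x) = setDist A B :=
  stmt6_general A B hAc hac hA0 T hTA0 F hF a b c h τ ha hb hc hh hτ hsum hprox
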